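/- arXiv:2009.02533 — 7 statements merged into one kernel-verified Lean document; each statement's English description precedes it below -/
import Mathlib

section
/- Let k be a field of characteristic p > 0 and f(x) a monic irreducible polynomial in k[x]. If f(x^{p^n}) is irreducible in k[x] for all n ∈ ℕ, then f ∉ k^p[x], and conversely if f has some coefficient not in k^p = {a^p : a ∈ k}, then f(x^{p^n}) is irreducible for all n. -/
/-!
Write `g⁽ᵖ⁾` for `g` with its coefficients raised to the `p`-th power, so that
`g⁽ᵖ⁾(X ^ p) = g ^ p`. Let `g` be a monic irreducible factor of `F = f(X ^ p)`. As `g` divides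
both `F` and `g⁽ᵖ⁾(X ^ p)`, the irreducible `f` cannot be coprime to `g⁽ᵖ⁾`, so `f ∣ g⁽ᵖ⁾`,
hence `F ∣ g ^ p` and `F = g ^ i` with `i ≤ p`. If `i = p` then `f = g⁽ᵖ⁾` has `p`-th power
coefficients. If `0 < i < p`, then `F' = 0` forces `g' = 0`, so `g = h(X ^ p)` and `f = h ^ i`,
whence `i = 1` and `F` is irreducible. The hypothesis on `f` passes to `f(X ^ p)`, so this
iterates. Conversely, `f = g⁽ᵖ⁾` gives `f(X ^ p) = g ^ p`.
-/

open Polynomial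

namespace Polynomial

theorem exists_map_frobenius_eq_iff_forall_coeff_eq_pow {k : Type*} [CommRing k] (p : ℕ)
    [ExpChar k p] (f : k[X]) :
    (∃ g : k[X], g.map (frobenius k p) = f) ↔ ∀ i, ∃ a : k, f.coeff i = a ^ p := by
  constructor
  · rintro ⟨g, rfl⟩ i
    exact ⟨g.coeff i, by rw [coeff_map, frobenius_def]⟩
  · intro h
    exact (mem_map_range (frobenius k p)).mpr fun i =>
      let ⟨a, ha⟩ := h i
      ⟨a, by rw [frobenius_def, ha]⟩

theorem expand_map_frobenius {k : Type*} [CommSemiring k] (p : ℕ) [ExpChar k p] (g : k[X]) :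
    expand k p (g.map (frobenius k p)) = g ^ p := by
  rw [← map_expand, map_frobenius_expand]

theorem forall_coeff_eq_pow_of_expand {R : Type*} [CommSemiring R] {q : ℕ} (hq : 0 < q) (e : ℕ)
    {f : R[X]} (h : ∀ i, ∃ a : R, (expand R q f).coeff i = a ^ e) :
    ∀ i, ∃ a : R, f.coeff i = a ^ e := fun i => by
  simpa only [coeff_expand_mul' hq] using h (q * i)

section Field

variable {k : Type*} [Field k] (p : ℕ) [ExpChar k p]

theorem dvd_map_frobenius_of_dvd_expand {f g : k[X]} (hf : Irreducible f) (hg : ¬ IsUnit g)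
    (hgf : g ∣ expand k p f) : f ∣ g.map (frobenius k p) := by
  by_contra hndvd
  have hcop : IsCoprime (expand k p f) (g ^ p) := by
    rw [← expand_map_frobenius]
    exact ((hf.coprime_iff_not_dvd).mpr hndvd).map (expand k p).toRingHom
  exact hg (hcop.isUnit_of_dvd' hgf (dvd_pow_self g (expChar_pos k p).ne'))

theorem exists_expand_eq_pow_of_dvd_expand {f g : k[X]} (hfm : f.Monic) (hf : Irreducible f)
    (hgm : g.Monic) (hg : Irreducible g) (hgf : g ∣ expand k p f) :
    ∃ i ≤ p, expand k p f = g ^ i := by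
  have hdvd : expand k p f ∣ g ^ p := by
    rw [← expand_map_frobenius]
    exact _root_.map_dvd (expand k p) (dvd_map_frobenius_of_dvd_expand p hf hg.not_isUnit hgf)
  obtain ⟨i, hip, hassoc⟩ := (dvd_prime_pow hg.prime p).mp hdvd
  exact ⟨i, hip, eq_of_monic_of_associated (hfm.expand (expChar_pos k p)) (hgm.pow i) hassoc⟩

end Field

theorem irreducible_expand_of_not_forall_coeff_eq_pow {k : Type*} [Field k] (p : ℕ)
    [Fact p.Prime] [CharP k p] {f : k[X]} (hfm : f.Monic) (hf : Irreducible f)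
    (hcoeff : ¬ ∀ i, ∃ a : k, f.coeff i = a ^ p) : Irreducible (expand k p f) := by
  have hp : 0 < p := (Fact.out : p.Prime).pos
  have hFu : ¬ IsUnit (expand k p f) :=
    not_isUnit_of_natDegree_pos _ (by rw [natDegree_expand]; exact Nat.mul_pos hf.natDegree_pos hp)
  obtain ⟨g, hgm, hg, hgF⟩ := exists_monic_irreducible_factor _ hFu
  obtain ⟨i, hip, hFg⟩ := exists_expand_eq_pow_of_dvd_expand p hfm hf hgm hg hgF
  rcases hip.lt_or_eq with hlt | hip
  · have hi0 : i ≠ 0 := by rintro rfl; exact hFu (hFg ▸ isUnit_one)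
    have hik : (i : k) ≠ 0 := fun h =>
      Nat.not_dvd_of_pos_of_lt (Nat.pos_of_ne_zero hi0) hlt ((CharP.cast_eq_zero_iff k p i).mp h)
    have hgder : derivative g = 0 := by
      have hder : derivative (g ^ i) = 0 := by
        rw [← hFg, derivative_expand]
        simp
      rw [derivative_pow] at hder
      exact (mul_eq_zero.mp hder).resolve_left
        (mul_ne_zero (C_ne_zero.mpr hik) (pow_ne_zero _ hg.ne_zero))
    have hfpow : f = contract p g ^ i := expand_injective hp <| by
      rw [map_pow, expand_contract p hgder hp.ne', hFg]
    have hi1 : i = 1 := by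
      by_contra hi1
      exact not_irreducible_pow hi1 (hfpow ▸ hf)
    rwa [hFg, hi1, pow_one]
  · refine absurd ?_ hcoeff
    refine (exists_map_frobenius_eq_iff_forall_coeff_eq_pow p f).mp ⟨g, expand_injective hp ?_⟩
    rw [hFg, hip, expand_map_frobenius]

theorem irreducible_expand_pow_of_not_forall_coeff_eq_pow {k : Type*} [Field k] (p : ℕ)
    [Fact p.Prime] [CharP k p] {f : k[X]} (hfm : f.Monic) (hf : Irreducible f)
    (hcoeff : ¬ ∀ i, ∃ a : k, f.coeff i = a ^ p) (n : ℕ) : Irreducible (expand k (p ^ n) f) := by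
  have hp : 0 < p := (Fact.out : p.Prime).pos
  induction n generalizing f with
  | zero => simpa using hf
  | succ n ih =>
    rw [pow_succ, ← expand_expand]
    exact ih (hfm.expand hp) (irreducible_expand_of_not_forall_coeff_eq_pow p hfm hf hcoeff)
      (mt (forall_coeff_eq_pow_of_expand hp p) hcoeff)

end Polynomial

theorem stmt1 {k : Type*} [Field k] (p : ℕ) [Fact p.Prime] [CharP k p]
    (f : Polynomial k) (hmonic : f.Monic) (hirr : Irreducible f) :
    (∀ n : ℕ, Irreducible (f.comp (Polynomial.X ^ p ^ n))) ↔
      ¬ (∀ i : ℕ, ∃ a : k, f.coeff i = a ^ p) := by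
  simp_rw [← expand_eq_comp_X_pow]
  refine ⟨fun hirr_all hcoeff => ?_,
    irreducible_expand_pow_of_not_forall_coeff_eq_pow p hmonic hirr⟩
  obtain ⟨g, rfl⟩ := (exists_map_frobenius_eq_iff_forall_coeff_eq_pow p f).mpr hcoeff
  have hexp := hirr_all 1
  rw [pow_one, expand_map_frobenius] at hexp
  exact not_irreducible_pow (Fact.out : p.Prime).ne_one hexp
end

section
/- Let k be a field of characteristic p > 0, f a monic irreducible polynomial in k[x], and n ∈ ℕ. Then f(x^{p^n}) is either irreducible in k[x] or is a p^{n_0}-th power of an irreducible polynomial in k[x] for some n_0 ∈ ℕ with n_0 ≥ 1. -/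
/-!
Let `g` be a monic irreducible factor of `F = f(x^p)`. Since `g^p = g^{(p)}(x^p)`, where `g^{(p)}`
has the `p`-th powers of the coefficients of `g`, the polynomials `f` and `g^{(p)}` are not coprime
(expansion preserves coprimality), so `f ∣ g^{(p)}` and `F ∣ g^p`. Hence `F = g^j`. If `p ∣ j`,
then `F = ((g^{(p)})^{j/p})(x^p)`, and if not, differentiating `F = g^j` gives `g' = 0`, so
`g = h(x^p)` and `F = (h^j)(x^p)`. Either way `f` is a power of some polynomial with exponent
`j/p` resp. `j`, which irreducibility forces to be `1`: `F` is irreducible or `F = g^p`.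
Iterating this over `x ↦ x^p` gives the theorem.
-/

open Polynomial

namespace Polynomial

theorem pow_expChar_eq_expand_map_frobenius {R : Type*} [CommSemiring R] (p : ℕ) [ExpChar R p]
    (g : R[X]) : g ^ p = expand R p (g.map (frobenius R p)) := by
  rw [← map_expand, map_frobenius_expand]

theorem eq_one_of_expand_eq_expand_pow {R : Type*} [CommSemiring R] {p : ℕ} (hp : 0 < p)
    {f φ : R[X]} {i : ℕ} (hf : Irreducible f) (h : expand R p f = expand R p φ ^ i) : i = 1 := by
  rw [← map_pow, expand_inj hp] at h
  by_contra hi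
  exact not_irreducible_pow hi (h ▸ hf)

section CharP

variable {k : Type*} [Field k] (p : ℕ) [hp : Fact p.Prime] [CharP k p]

theorem expand_dvd_pow_of_dvd_expand {f g : k[X]} (hf : Irreducible f) (hg : Irreducible g)
    (hgf : g ∣ expand k p f) : expand k p f ∣ g ^ p := by
  rw [pow_expChar_eq_expand_map_frobenius p g]
  refine _root_.map_dvd (expand k p) (of_not_not fun hndvd => ?_)
  have hcop := hf.coprime_iff_not_dvd.2 hndvd
  rw [← isCoprime_expand hp.out.ne_zero, ← pow_expChar_eq_expand_map_frobenius] at hcop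
  exact hg.not_isUnit (hcop.isUnit_of_dvd' hgf (dvd_pow_self g hp.out.ne_zero))

theorem eq_one_or_eq_of_expand_eq_pow {f g : k[X]} {j : ℕ} (hf : Irreducible f) (hg : g ≠ 0)
    (h : expand k p f = g ^ j) : j = 1 ∨ j = p := by
  by_cases hpj : p ∣ j
  · obtain ⟨i, rfl⟩ := hpj
    rw [pow_mul, pow_expChar_eq_expand_map_frobenius p g] at h
    rw [eq_one_of_expand_eq_expand_pow hp.out.pos hf h, mul_one]
    exact Or.inr rfl
  · have hg' : derivative g = 0 := by
      have hderiv := congrArg derivative h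
      rw [derivative_expand, CharP.cast_eq_zero, zero_mul, mul_zero, derivative_pow] at hderiv
      have hj : (j : k) ≠ 0 := by rwa [ne_eq, CharP.cast_eq_zero_iff k p]
      exact (mul_eq_zero.1 hderiv.symm).resolve_left
        (mul_ne_zero (C_ne_zero.2 hj) (pow_ne_zero _ hg))
    rw [← expand_contract p hg' hp.out.ne_zero] at h
    exact Or.inl (eq_one_of_expand_eq_expand_pow hp.out.pos hf h)

theorem irreducible_expand_or_eq_pow_of_monic {f : k[X]} (hm : f.Monic) (hf : Irreducible f) :
    Irreducible (expand k p f) ∨ ∃ g : k[X], g.Monic ∧ Irreducible g ∧ expand k p f = g ^ p := by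
  have hF : (expand k p f).Monic := hm.expand hp.out.pos
  have hFunit : ¬IsUnit (expand k p f) := not_isUnit_of_natDegree_pos _ <| by
    rw [natDegree_expand]
    exact Nat.mul_pos hf.natDegree_pos hp.out.pos
  obtain ⟨g, hgm, hg, hgF⟩ := exists_monic_irreducible_factor _ hFunit
  obtain ⟨j, -, hj⟩ := (dvd_prime_pow hg.prime p).1 (expand_dvd_pow_of_dvd_expand p hf hg hgF)
  have hFj := eq_of_monic_of_associated hF (hgm.pow j) hj
  rcases eq_one_or_eq_of_expand_eq_pow p hf hg.ne_zero hFj with rfl | rfl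
  · left
    rwa [hFj, pow_one]
  · exact Or.inr ⟨g, hgm, hg, hFj⟩

theorem exists_expand_pow_eq_pow_pow_of_monic {f : k[X]} (hm : f.Monic) (hf : Irreducible f)
    (n : ℕ) : ∃ m : ℕ, ∃ g : k[X], g.Monic ∧ Irreducible g ∧ expand k (p ^ n) f = g ^ p ^ m := by
  induction n with
  | zero => exact ⟨0, f, hm, hf, by simp⟩
  | succ n ih =>
    obtain ⟨m, g, hgm, hg, hgf⟩ := ih
    have hsucc : expand k (p ^ (n + 1)) f = expand k p g ^ p ^ m := by
      rw [pow_succ', ← expand_expand, hgf, map_pow]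
    rcases irreducible_expand_or_eq_pow_of_monic p hgm hg with hirr | ⟨h, hhm, hh, hhg⟩
    · exact ⟨m, expand k p g, hgm.expand hp.out.pos, hirr, hsucc⟩
    · exact ⟨m + 1, h, hhm, hh, by rw [hsucc, hhg, ← pow_mul, ← pow_succ']⟩

end CharP

end Polynomial

theorem stmt2 {k : Type*} [Field k] (p : ℕ) [Fact p.Prime] [CharP k p]
    (f : Polynomial k) (hmonic : f.Monic) (hirr : Irreducible f) (n : ℕ) :
    Irreducible (f.comp (Polynomial.X ^ p ^ n)) ∨
      ∃ n₀ : ℕ, 1 ≤ n₀ ∧ ∃ g : Polynomial k, Irreducible g ∧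
        f.comp (Polynomial.X ^ p ^ n) = g ^ p ^ n₀ := by
  obtain ⟨m, g, -, hg, hfg⟩ := exists_expand_pow_eq_pow_pow_of_monic p hmonic hirr n
  rw [expand_eq_comp_X_pow] at hfg
  rcases m with _ | m
  · left
    rwa [hfg, pow_zero, pow_one]
  · exact Or.inr ⟨m + 1, by omega, g, hg, hfg⟩
end

section
/- Let k be a field of characteristic p > 0 and f ∈ k[x] monic irreducible and separable. If f(x^{p^n}) = g(x)^{p^n} for some monic g ∈ k[x] of the same degree as f, then g is separable. -/
open Polynomial

theorem Polynomial.eq_map_iterateFrobenius_of_expand_eq_pow {R : Type*} [CommSemiring R]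
    (p : ℕ) [ExpChar R p] {n : ℕ} {f g : R[X]} (h : expand R (p ^ n) f = g ^ p ^ n) :
    f = g.map (iterateFrobenius R p n) := by
  apply expand_injective (pow_pos (expChar_pos R p) n)
  rw [h, ← map_iterateFrobenius_expand p g n, map_expand]

theorem stmt3_general {k : Type*} [Field k] (p : ℕ) [Fact p.Prime] [CharP k p]
    (n : ℕ) (f g : Polynomial k)
    (hsep : f.Separable)
    (h : f.comp (Polynomial.X ^ p ^ n) = g ^ p ^ n) :
    g.Separable := by
  rw [← expand_eq_comp_X_pow] at h
  rw [eq_map_iterateFrobenius_of_expand_eq_pow p h, separable_map] at hsep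
  exact hsep

theorem stmt3 {k : Type*} [Field k] (p : ℕ) [Fact p.Prime] [CharP k p]
    (n : ℕ) (f g : Polynomial k) (hmonicf : f.Monic) (hirr : Irreducible f)
    (hsep : f.Separable) (hmonicg : g.Monic) (hdeg : g.natDegree = f.natDegree)
    (h : f.comp (Polynomial.X ^ p ^ n) = g ^ p ^ n) :
    g.Separable :=
  stmt3_general p n f g hsep h
end

section
/- Let M(x) = x^{r₁} + a₁x^{r₁-1} + ⋯ + a_{r₁-1}x + μ𝔭_v^{m/r₂} ∈ A[x] be irreducible with root π generating k(π)/k, where A = 𝔽_q[T] and 𝔭_v is monic irreducible. If 𝔭_v does not divide the linear coefficient a_{r₁-1}, then π has a unique zero in k(π) above the place v. -/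
open Polynomial

/-!
Write `M = x · M.divX + M(0)` and put `b = M.divX(π)`, so that `π b = -μ 𝔭^e` with `e = m / r₂`,
and `b ≡ a_{r₁-1} (mod π)`. In the integral closure `O` (a Dedekind domain, as `a_{r₁-1} ≠ 0`
makes `M` separable), a prime `P ∋ π` over `𝔭` does not contain `b`, so `P^e ∣ (π)`. The norm of
`π` is `±μ 𝔭^e`, so the ideal norm of `(π)` is `(𝔭)^e`, while each such `P` has norm divisible
by `(𝔭)`: two distinct ones would give `(𝔭)^{2e} ∣ (𝔭)^e`. Since `(π)` has norm `(𝔭)^e`, it is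
proper and every prime containing it lies over `𝔭`, which gives existence.
-/

namespace Polynomial

theorem aeval_divX_mul_add_coeff_zero {R S : Type*} [CommSemiring R] [Semiring S] [Algebra R S]
    (p : R[X]) (x : S) : aeval x p.divX * x + algebraMap R S (p.coeff 0) = aeval x p := by
  conv_rhs => rw [← p.divX_mul_X_add]
  simp

theorem separable_of_irreducible_of_coeff_one_ne_zero {K : Type*} [Field K] {f : K[X]}
    (hf : Irreducible f) (h1 : f.coeff 1 ≠ 0) : f.Separable := by
  refine (separable_iff_derivative_ne_zero hf).2 fun h ↦ h1 ?_
  simpa [coeff_derivative] using congrArg (coeff · 0) h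

end Polynomial

theorem Algebra.isSeparable_of_adjoin_simple_eq_top {K L : Type*} [Field K] [Field L]
    [Algebra K L] {x : L} (hx : IsSeparable K x) (h : Algebra.adjoin K {x} = ⊤) :
    Algebra.IsSeparable K L := by
  refine (separableClosure.eq_top_iff K L).1 (top_unique fun y _ ↦ ?_)
  have hy : y ∈ Algebra.adjoin K {x} := h ▸ Algebra.mem_top
  exact Algebra.adjoin_le (S := (separableClosure K L).toSubalgebra)
    (Set.singleton_subset_iff.2 (mem_separableClosure_iff.2 hx)) hy

theorem Algebra.intNorm_eq_of_adjoin_eq_top {A K L B : Type*} [CommRing A] [IsDomain A]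
    [IsIntegrallyClosed A] [Field K] [Algebra A K] [IsFractionRing A K] [Field L] [Algebra K L]
    [Algebra A L] [IsScalarTower A K L] [FiniteDimensional K L] [CommRing B] [IsDomain B]
    [IsIntegrallyClosed B] [Algebra A B] [Algebra B L] [IsScalarTower A B L]
    [IsIntegralClosure B A L] [Algebra.IsIntegral A B] [Module.IsTorsionFree A B]
    {x : B} (hx : Algebra.adjoin K {algebraMap B L x} = ⊤) {f : A[X]}
    (hf : f.map (algebraMap A K) = minpoly K (algebraMap B L x)) :
    Algebra.intNorm A B x = (-1) ^ f.natDegree * f.coeff 0 := by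
  have hint : IsIntegral K (algebraMap B L x) :=
    (IsIntegralClosure.isIntegral A L x).algebraMap.tower_top
  apply IsFractionRing.injective A K
  rw [Algebra.algebraMap_intNorm (L := L), ← PowerBasis.ofAdjoinEqTop'_gen hint hx,
    PowerBasis.norm_gen_eq_coeff_zero_minpoly, PowerBasis.ofAdjoinEqTop'_dim,
    PowerBasis.ofAdjoinEqTop'_gen, ← hf,
    natDegree_map_eq_of_injective (IsFractionRing.injective A K), coeff_map]
  simp

namespace Ideal

theorem pow_dvd_span_singleton_of_aeval_eq_zero {R S : Type*} [CommRing R] [CommRing S]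
    [IsDedekindDomain S] [Algebra R S] {f : R[X]} {x a : S} {e : ℕ} (hfx : aeval x f = 0)
    (hf0 : Associated (algebraMap R S (f.coeff 0)) (a ^ e)) {P : Ideal S} [P.IsPrime]
    (hP : P ≠ ⊥) (hxP : x ∈ P) (haP : a ∈ P) (hf1 : algebraMap R S (f.coeff 1) ∉ P) :
    P ^ e ∣ span {x} := by
  have h0 := aeval_divX_mul_add_coeff_zero f x
  have h1 := aeval_divX_mul_add_coeff_zero f.divX x
  rw [hfx] at h0
  rw [coeff_divX, zero_add] at h1
  set b := aeval x f.divX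
  have hbP : b ∉ P := by
    intro hbP
    apply hf1
    rw [show algebraMap R S (f.coeff 1) = b - aeval x f.divX.divX * x by linear_combination h1]
    exact P.sub_mem hbP (P.mul_mem_left _ hxP)
  refine (prime_of_isPrime hP ‹_›).pow_dvd_of_dvd_mul_right e (b := span {b})
    (mt dvd_span_singleton.1 hbP) ?_
  rw [span_singleton_mul_span_singleton,
    show x * b = -algebraMap R S (f.coeff 0) by linear_combination h0, span_singleton_neg,
    span_singleton_eq_span_singleton.2 hf0, ← span_singleton_pow]
  exact pow_dvd_pow_of_dvd (dvd_span_singleton.2 haP) e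

section RelNorm

variable {R S : Type*} [CommRing R] [IsDedekindDomain R] [CommRing S] [IsDedekindDomain S]
  [Algebra R S] [Module.Finite R S] [Module.IsTorsionFree R S] {p : Ideal R} [p.IsMaximal]
  {x : S} {e : ℕ}

theorem comap_eq_of_relNorm_span_singleton_eq_pow (hx : relNorm R (span {x}) = p ^ e)
    (he : e ≠ 0) {P : Ideal S} [P.IsPrime] (hxP : x ∈ P) : P.comap (algebraMap R S) = p := by
  have hle : p ^ e ≤ P.comap (algebraMap R S) := hx ▸
    (relNorm_mono R ((span_singleton_le_iff_mem _).2 hxP)).trans (relNorm_le_comap R P)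
  exact ((IsMaximal.eq_of_le ‹_› (comap_ne_top _ (IsPrime.ne_top ‹_›))
    ((IsPrime.pow_le_iff he).1 hle))).symm

theorem span_singleton_ne_top_of_relNorm_eq_pow (hx : relNorm R (span {x}) = p ^ e)
    (he : e ≠ 0) : span {x} ≠ ⊤ := by
  intro h
  rw [h, relNorm_top] at hx
  exact IsMaximal.ne_top ‹_› (eq_top_iff.2 (hx.le.trans (pow_le_self he)))

theorem eq_of_pow_dvd_span_singleton (hp : p ≠ ⊥) (hx : relNorm R (span {x}) = p ^ e)
    (he : e ≠ 0) {P Q : Ideal S} [P.IsMaximal] [Q.IsMaximal] (hP : P.comap (algebraMap R S) = p)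
    (hQ : Q.comap (algebraMap R S) = p) (hPx : P ^ e ∣ span {x}) (hQx : Q ^ e ∣ span {x}) :
    P = Q := by
  by_contra hPQ
  have hpP : p ∣ relNorm R P := dvd_iff_le.2 (hP ▸ relNorm_le_comap R P)
  have hpQ : p ∣ relNorm R Q := dvd_iff_le.2 (hQ ▸ relNorm_le_comap R Q)
  have hPQx : P ^ e * Q ^ e ∣ span {x} := (isCoprime_of_isMaximal hPQ).pow.mul_dvd hPx hQx
  have hpow : p ^ e * p ^ e ∣ p ^ e := calc
    p ^ e * p ^ e ∣ relNorm R P ^ e * relNorm R Q ^ e :=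
      mul_dvd_mul (pow_dvd_pow_of_dvd hpP e) (pow_dvd_pow_of_dvd hpQ e)
    _ = relNorm R (P ^ e * Q ^ e) := by simp only [map_mul, map_pow]
    _ ∣ relNorm R (span {x}) := map_dvd _ hPQx
    _ = p ^ e := hx
  rw [← pow_add, pow_dvd_pow_iff hp (by rw [isUnit_iff]; exact IsMaximal.ne_top ‹_›)] at hpow
  omega

theorem existsUnique_isPrime_mem_comap_eq (hp : p ≠ ⊥) (hx : relNorm R (span {x}) = p ^ e)
    (he : e ≠ 0) (hpow : ∀ P : Ideal S, P.IsPrime → P ≠ ⊥ → P.comap (algebraMap R S) = p →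
      x ∈ P → P ^ e ∣ span {x}) :
    ∃! P : Ideal S, P.IsPrime ∧ x ∈ P ∧ P.comap (algebraMap R S) = p := by
  have hbot : ∀ P : Ideal S, P.comap (algebraMap R S) = p → P ≠ ⊥ := by
    rintro P hP rfl
    exact hp (hP ▸ comap_bot_of_injective _ (FaithfulSMul.algebraMap_injective R S))
  obtain ⟨P, hPmax, hxP⟩ := exists_le_maximal _ (span_singleton_ne_top_of_relNorm_eq_pow hx he)
  replace hxP : x ∈ P := hxP (mem_span_singleton_self x)
  have hPp := comap_eq_of_relNorm_span_singleton_eq_pow hx he hxP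
  refine ⟨P, ⟨hPmax.isPrime, hxP, hPp⟩, fun Q ⟨hQ, hxQ, hQp⟩ ↦ ?_⟩
  have := hQ.isMaximal (hbot Q hQp)
  exact eq_of_pow_dvd_span_singleton hp hx he hQp hPp (hpow Q hQ (hbot Q hQp) hQp hxQ)
    (hpow P hPmax.isPrime (hbot P hPp) hPp hxP)

end RelNorm

end Ideal

theorem stmt9_general {Fq K : Type*} [Field Fq] [Field K]
    [Algebra (Polynomial Fq) K] [Algebra (RatFunc Fq) K]
    [IsScalarTower (Polynomial Fq) (RatFunc Fq) K]
    (π : integralClosure (Polynomial Fq) K)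
    (hgen : Algebra.adjoin (RatFunc Fq) {(π : K)} = ⊤)
    (𝔭 : Polynomial Fq) (h𝔭 : Irreducible 𝔭)
    (μ : Fq) (hμ : μ ≠ 0)
    (r₂ m : ℕ) (hr₂ : 0 < r₂)
    (hm : 0 < m) (hr₂m : r₂ ∣ m)
    (M : Polynomial (Polynomial Fq))
    (hMmin : M.map (algebraMap (Polynomial Fq) (RatFunc Fq)) = minpoly (RatFunc Fq) (π : K))
    (hconst : M.coeff 0 = C μ * 𝔭 ^ (m / r₂))
    (hlin : ¬ 𝔭 ∣ M.coeff 1) :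
    ∃! P : Ideal (integralClosure (Polynomial Fq) K),
      P.IsPrime ∧ π ∈ P ∧
        P.comap (algebraMap (Polynomial Fq) (integralClosure (Polynomial Fq) K))
          = Ideal.span {𝔭} := by
  have he : m / r₂ ≠ 0 := (Nat.div_pos (Nat.le_of_dvd hm hr₂m) hr₂).ne'
  have hint : IsIntegral (RatFunc Fq) (π : K) := π.2.tower_top
  have hsep : IsSeparable (RatFunc Fq) (π : K) := by
    rw [IsSeparable, ← hMmin]
    refine separable_of_irreducible_of_coeff_one_ne_zero (hMmin ▸ minpoly.irreducible hint) ?_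
    rw [coeff_map]
    exact (map_ne_zero_iff _ (IsFractionRing.injective _ _)).2 fun h ↦ hlin (h ▸ dvd_zero 𝔭)
  have : Module.IsTorsionFree (Polynomial Fq) K := .trans_faithfulSMul _ (RatFunc Fq) _
  have : FiniteDimensional (RatFunc Fq) K := (PowerBasis.ofAdjoinEqTop' hint hgen).finite
  have := Algebra.isSeparable_of_adjoin_simple_eq_top hsep hgen
  have :=
    IsIntegralClosure.finite (Polynomial Fq) (RatFunc Fq) K (integralClosure (Polynomial Fq) K)
  have := integralClosure.isDedekindDomain (Polynomial Fq) (RatFunc Fq) K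
  have := PrincipalIdealRing.isMaximal_of_irreducible h𝔭
  have hCμ : IsUnit (C μ) := isUnit_C.2 hμ.isUnit
  have hx : algebraMap (integralClosure (Polynomial Fq) K) K π = π := rfl
  have hM : aeval π M = 0 := by
    apply FaithfulSMul.algebraMap_injective (integralClosure (Polynomial Fq) K) K
    rw [← aeval_algebraMap_apply, map_zero, hx, ← aeval_map_algebraMap (RatFunc Fq), hMmin,
      minpoly.aeval]
  -- unifying `algebraMap _ K π` with the coercion `↑π` inside the norm lemma times out
  rw [← hx] at hgen hMmin
  have hrel : Ideal.relNorm (Polynomial Fq) (Ideal.span {π}) = Ideal.span {𝔭} ^ (m / r₂) := by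
    rw [Ideal.relNorm_singleton, Ideal.span_singleton_pow,
      Algebra.intNorm_eq_of_adjoin_eq_top hgen hMmin, hconst,
      Ideal.span_singleton_eq_span_singleton, ← mul_assoc]
    exact associated_unit_mul_left _ _ ((isUnit_one.neg.pow _).mul hCμ)
  refine Ideal.existsUnique_isPrime_mem_comap_eq (by simpa using h𝔭.ne_zero) hrel he
    fun P _ hP hPp hπP ↦ Ideal.pow_dvd_span_singleton_of_aeval_eq_zero hM ?_ hP hπP
      (a := algebraMap _ _ 𝔭)
      (by rw [← Ideal.mem_comap, hPp]; exact Ideal.mem_span_singleton_self 𝔭)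
      fun h ↦ hlin (Ideal.mem_span_singleton.1 (hPp ▸ h))
  rw [hconst, map_mul, map_pow]
  exact associated_unit_mul_left _ _ (hCμ.map _)

/-- If `M(x) = x^{r₁} + a₁x^{r₁-1} + ⋯ + a_{r₁-1}x + μ𝔭^{m/r₂}` is irreducible
over `k = 𝔽_q(T)` with root `π` generating `k(π)`, and `𝔭` does not divide the
linear coefficient `a_{r₁-1} = M.coeff 1`, then `π` has a unique zero in `k(π)`
above the place `v` defined by `𝔭` (a unique prime of the integral closure of
`A = 𝔽_q[T]` in `k(π)` lying over `𝔭` and containing `π`). -/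
theorem stmt9 {Fq K : Type*} [Field Fq] [Fintype Fq] [Field K]
    [Algebra (Polynomial Fq) K] [Algebra (RatFunc Fq) K]
    [IsScalarTower (Polynomial Fq) (RatFunc Fq) K]
    (π : integralClosure (Polynomial Fq) K) (hπ0 : (π : K) ≠ 0)
    (hgen : Algebra.adjoin (RatFunc Fq) {(π : K)} = ⊤)
    (𝔭 : Polynomial Fq) (h𝔭 : Irreducible 𝔭) (h𝔭monic : 𝔭.Monic)
    (μ : Fq) (hμ : μ ≠ 0)
    (r r₁ r₂ m : ℕ) (hrfac : r = r₁ * r₂) (hr₁ : 0 < r₁) (hr₂ : 0 < r₂)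
    (hm : 0 < m) (hr₂m : r₂ ∣ m)
    (M : Polynomial (Polynomial Fq)) (hMmonic : M.Monic) (hMdeg : M.natDegree = r₁)
    (hMirr : Irreducible (M.map (algebraMap (Polynomial Fq) (RatFunc Fq))))
    (hMmin : M.map (algebraMap (Polynomial Fq) (RatFunc Fq)) = minpoly (RatFunc Fq) (π : K))
    (hconst : M.coeff 0 = C μ * 𝔭 ^ (m / r₂))
    (hlin : ¬ 𝔭 ∣ M.coeff 1) :
    ∃! P : Ideal (integralClosure (Polynomial Fq) K),
      P.IsPrime ∧ π ∈ P ∧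
        P.comap (algebraMap (Polynomial Fq) (integralClosure (Polynomial Fq) K))
          = Ideal.span {𝔭} :=
  stmt9_general π hgen 𝔭 h𝔭 μ hμ r₂ m hr₂ hm hr₂m M hMmin hconst hlin
end

section
/- Let L be a finite field and d = gcd(q^k - 1 : k ∈ I) for a nonempty finite set I of positive integers, where q is a prime power. For elements g_k, g_k' ∈ L^* (k ∈ I) suppose there exists x in an extension of L with g_k' = g_k x^{q^k-1} for all k ∈ I, and integers (λ_k) with Σ λ_k(q^k-1) = d such that Π g_k'^{λ_k} = Π g_k^{λ_k} · y^d for some y ∈ L^*. Then g_k' = g_k y^{q^k-1} for all k ∈ I. -/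
/-!
Twisting by `x` multiplies `∏ g_k ^ λ_k` by `x ^ ∑ λ_k (q^k - 1) = x ^ d`, so the hypothesis on `y`
says `x ^ d = y ^ d`; as `d ∣ q^k - 1` this gives `x ^ (q^k - 1) = y ^ (q^k - 1)`. The argument runs
in the unit group of `E`, into which `Lˣ` embeds.
-/

theorem Finset.prod_zpow_eq_zpow_sum {ι G : Type*} [CommGroup G] (s : Finset ι) (c : ι → ℤ)
    (x : G) : ∏ i ∈ s, x ^ c i = x ^ ∑ i ∈ s, c i := by
  induction s using Finset.cons_induction with
  | empty => simp
  | cons a t ha ih => rw [Finset.sum_cons, Finset.prod_cons, zpow_add, ih]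

section CommGroup

variable {ι G : Type*} [CommGroup G] {s : Finset ι} {e : ι → ℕ} {lam : ι → ℤ} {d : ℕ}
  {a a' : ι → G} {x y : G}

theorem prod_zpow_of_eq_mul_pow (hlam : ∑ i ∈ s, lam i * e i = d)
    (ha' : ∀ i ∈ s, a' i = a i * x ^ e i) :
    ∏ i ∈ s, a' i ^ lam i = (∏ i ∈ s, a i ^ lam i) * x ^ d := by
  calc ∏ i ∈ s, a' i ^ lam i
      = ∏ i ∈ s, a i ^ lam i * x ^ (lam i * e i) := Finset.prod_congr rfl fun i hi => by
        rw [ha' i hi, mul_zpow, mul_comm (lam i), zpow_mul, zpow_natCast]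
    _ = (∏ i ∈ s, a i ^ lam i) * x ^ d := by
        rw [Finset.prod_mul_distrib, Finset.prod_zpow_eq_zpow_sum, hlam, zpow_natCast]

theorem eq_mul_pow_of_prod_zpow_eq (hde : ∀ i ∈ s, d ∣ e i) (hlam : ∑ i ∈ s, lam i * e i = d)
    (ha' : ∀ i ∈ s, a' i = a i * x ^ e i)
    (hprod : ∏ i ∈ s, a' i ^ lam i = (∏ i ∈ s, a i ^ lam i) * y ^ d) :
    ∀ i ∈ s, a' i = a i * y ^ e i := by
  have hxy : x ^ d = y ^ d := by
    rw [prod_zpow_of_eq_mul_pow hlam ha'] at hprod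
    exact mul_left_cancel hprod
  intro i hi
  obtain ⟨m, hm⟩ := hde i hi
  rw [ha' i hi, hm, pow_mul, pow_mul, hxy]

end CommGroup

theorem stmt12_general {L E : Type*} [Field L] [Fintype L] [Field E] [Algebra L E]
    (q : ℕ) (hq : ∃ p n : ℕ, p.Prime ∧ 0 < n ∧ q = p ^ n)
    (I : Finset ℕ)
    (d : ℕ) (hd : d = I.gcd fun k => q ^ k - 1)
    (g g' : ℕ → Lˣ) (x : E)
    (hx : ∀ k ∈ I, algebraMap L E (g' k : L) = algebraMap L E (g k : L) * x ^ (q ^ k - 1))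
    (lam : ℕ → ℤ)
    (hlam : ∑ k ∈ I, lam k * ((q : ℤ) ^ k - 1) = (d : ℤ))
    (y : Lˣ)
    (hy : ∏ k ∈ I, g' k ^ lam k = (∏ k ∈ I, g k ^ lam k) * y ^ d) :
    ∀ k ∈ I, g' k = g k * y ^ (q ^ k - 1) := by
  by_cases hx0 : x = 0
  · -- `g' k ≠ 0` forces every exponent `q ^ k - 1` to vanish.
    have he : ∀ k ∈ I, q ^ k - 1 = 0 := fun k hk => by
      by_contra h
      simpa [hx0, zero_pow h] using hx k hk
    intro k hk
    ext
    simpa [he k hk] using hx k hk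
  obtain ⟨p, n, hp, -, rfl⟩ := hq
  have hcast : ∀ k, (((p ^ n) ^ k - 1 : ℕ) : ℤ) = ((p ^ n : ℕ) : ℤ) ^ k - 1 := fun k => by
    rw [Nat.cast_sub (Nat.one_le_pow _ _ (pow_pos hp.pos n)), Nat.cast_pow, Nat.cast_one]
  set f : Lˣ →* Eˣ := Units.map (algebraMap L E : L →* E)
  have hfg : ∀ k ∈ I, f (g' k) = f (g k) * Units.mk0 x hx0 ^ ((p ^ n) ^ k - 1) :=
    fun k hk => Units.ext (hx k hk)
  have hfy : ∏ k ∈ I, f (g' k) ^ lam k = (∏ k ∈ I, f (g k) ^ lam k) * f y ^ d := by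
    simpa only [map_prod, map_zpow, map_mul, map_pow] using congrArg f hy
  intro k hk
  apply Units.map_injective (algebraMap L E).injective
  rw [map_mul, map_pow]
  exact eq_mul_pow_of_prod_zpow_eq (fun k hk => hd ▸ Finset.gcd_dvd hk)
    (by simpa only [hcast] using hlam) hfg hfy k hk

theorem stmt12 {L E : Type*} [Field L] [Fintype L] [Field E] [Algebra L E]
    (q : ℕ) (hq : ∃ p n : ℕ, p.Prime ∧ 0 < n ∧ q = p ^ n)
    (I : Finset ℕ) (hI : I.Nonempty) (hpos : ∀ k ∈ I, 0 < k)
    (d : ℕ) (hd : d = I.gcd fun k => q ^ k - 1)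
    (g g' : ℕ → Lˣ) (x : E)
    (hx : ∀ k ∈ I, algebraMap L E (g' k : L) = algebraMap L E (g k : L) * x ^ (q ^ k - 1))
    (lam : ℕ → ℤ)
    (hlam : ∑ k ∈ I, lam k * ((q : ℤ) ^ k - 1) = (d : ℤ))
    (y : Lˣ)
    (hy : ∏ k ∈ I, g' k ^ lam k = (∏ k ∈ I, g k ^ lam k) * y ^ d) :
    ∀ k ∈ I, g' k = g k * y ^ (q ^ k - 1) :=
  stmt12_general q hq I d hd g g' x hx lam hlam y hy
end

section
/- Let φ and ψ be rank r Drinfeld A-modules over a finite A-field L with φ_T = γ(T) + Σ g_iτ^i and ψ_T = γ(T) + Σ g_i'τ^i. Then φ and ψ are isomorphic over L if and only if they are isomorphic over the separable closure L^{sep} and FI_λ(φ) = FI_λ(ψ) for some (equivalently, all) λ ∈ B, where FI_λ(φ) = Π_{k∈I} g_k^{λ_k} mod L^{*d}, d = gcd(q^k-1 : k ∈ I), I = {i : g_i ≠ 0}, and B is the set of integer tuples (λ_k)_{k∈I} with Σ λ_k(q^k-1) = d. -/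
/-!
An isomorphism `x ∈ L^*` is one over the algebraic closure, and raising `g'_k = g_k x^{q^k-1}`
to the powers `λ_k` gives `FI_λ(ψ) = FI_λ(φ) x^d`. Conversely, if `x ∈ \bar L^*` is an
isomorphism and `FI_λ(ψ) = FI_λ(φ) y^d` with `y ∈ L^*`, comparing the two identities gives
`x^d = y^d`; since `d` divides every `q^k - 1` with `g_k ≠ 0`, this turns `x` into `y` in all
the relations, so `y` is an isomorphism over `L`. Bézout provides some `λ ∈ B`, which makes
"for some `λ`" and "for all `λ`" equivalent.
-/

open scoped Classical

namespace Finset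

variable {ι : Type*}

theorem natCast_gcd (s : Finset ι) (f : ι → ℕ) :
    ((s.gcd f : ℕ) : ℤ) = s.gcd fun i => (f i : ℤ) := by
  induction s using Finset.cons_induction with
  | empty => simp
  | cons a s ha ih =>
    rw [gcd_cons, gcd_cons, ← ih, ← Int.coe_gcd, Int.gcd_natCast_natCast]; rfl

theorem exists_sum_mul_eq_gcd (s : Finset ι) (f : ι → ℕ) :
    ∃ c : ι → ℤ, ∑ i ∈ s, c i * f i = s.gcd f := by
  obtain ⟨c, hc⟩ := s.gcd_eq_sum_mul fun i => (f i : ℤ)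
  exact ⟨c, by simp_rw [natCast_gcd, hc, mul_comm]⟩

theorem prod_mul_pow_zpow {G : Type*} [CommGroupWithZero G] (s : Finset ι) (g : ι → G)
    {x : G} (hx : x ≠ 0) (e : ι → ℕ) (c : ι → ℤ) :
    ∏ i ∈ s, (g i * x ^ e i) ^ c i = (∏ i ∈ s, g i ^ c i) * x ^ (∑ i ∈ s, c i * e i) := by
  induction s using Finset.cons_induction with
  | empty => simp
  | cons a s ha ih =>
    rw [prod_cons, prod_cons, sum_cons, ih, mul_zpow, zpow_add₀ hx, ← zpow_natCast x (e a),
      ← zpow_mul, mul_comm (e a : ℤ), mul_mul_mul_comm]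

theorem prod_zpow_eq_mul_pow_of_eq_mul_pow {G : Type*} [CommGroupWithZero G] {s : Finset ι}
    {g g' : ι → G} {e : ι → ℕ} {x : G} (hx : x ≠ 0) (h : ∀ i ∈ s, g' i = g i * x ^ e i)
    {c : ι → ℤ} {d : ℕ} (hc : ∑ i ∈ s, c i * e i = d) :
    ∏ i ∈ s, g' i ^ c i = (∏ i ∈ s, g i ^ c i) * x ^ d := by
  rw [prod_congr rfl fun i hi => by rw [h i hi], prod_mul_pow_zpow _ _ hx, hc, zpow_natCast]

end Finset

section Descent

open Finset

variable {ι K E : Type*} [Field K] [Field E] [Algebra K E]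
  {S : Finset ι} {e : ι → ℕ} {g g' : ι → K} {c : ι → ℤ} {d : ℕ}

theorem eq_mul_pow_of_algebraMap_eq_mul_pow (hdvd : ∀ i ∈ S, g i ≠ 0 → d ∣ e i)
    (hc : ∑ i ∈ S with g i ≠ 0, c i * e i = d) {x : E} (hx : x ≠ 0)
    (hxE : ∀ i ∈ S, algebraMap K E (g' i) = algebraMap K E (g i) * x ^ e i) {y : K}
    (hy : ∏ i ∈ S with g i ≠ 0, g' i ^ c i = (∏ i ∈ S with g i ≠ 0, g i ^ c i) * y ^ d) :
    ∀ i ∈ S, g' i = g i * y ^ e i := by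
  set f := algebraMap K E
  have hmap (u : ι → K) : f (∏ i ∈ S with g i ≠ 0, u i ^ c i)
      = ∏ i ∈ S with g i ≠ 0, f (u i) ^ c i := by
    simp only [map_prod, map_zpow₀]
  have hne : f (∏ i ∈ S with g i ≠ 0, g i ^ c i) ≠ 0 :=
    (map_ne_zero f).2 <| prod_ne_zero_iff.2 fun i hi => zpow_ne_zero _ (mem_filter.1 hi).2
  have hxd : x ^ d = f y ^ d := by
    refine mul_left_cancel₀ hne ?_
    calc f (∏ i ∈ S with g i ≠ 0, g i ^ c i) * x ^ d
        = f (∏ i ∈ S with g i ≠ 0, g' i ^ c i) := by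
          rw [hmap, hmap, prod_zpow_eq_mul_pow_of_eq_mul_pow hx
            (fun i hi => hxE i (mem_filter.1 hi).1) hc]
      _ = f (∏ i ∈ S with g i ≠ 0, g i ^ c i) * f y ^ d := by rw [hy, map_mul, map_pow]
  intro i hi
  apply f.injective
  by_cases hgi : g i = 0
  · simp [hxE i hi, hgi]
  · obtain ⟨m, hm⟩ := hdvd i hi hgi
    rw [hxE i hi, map_mul, map_pow, hm, pow_mul, pow_mul, hxd]

theorem exists_eq_mul_pow_iff (hdvd : ∀ i ∈ S, g i ≠ 0 → d ∣ e i)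
    (hc : ∑ i ∈ S with g i ≠ 0, c i * e i = d) :
    (∃ x : K, x ≠ 0 ∧ ∀ i ∈ S, g' i = g i * x ^ e i) ↔
      (∃ x : E, x ≠ 0 ∧ ∀ i ∈ S, algebraMap K E (g' i) = algebraMap K E (g i) * x ^ e i) ∧
        ∃ y : K, y ≠ 0 ∧
          ∏ i ∈ S with g i ≠ 0, g' i ^ c i = (∏ i ∈ S with g i ≠ 0, g i ^ c i) * y ^ d := by
  constructor
  · rintro ⟨x, hx, h⟩
    refine ⟨⟨algebraMap K E x, (map_ne_zero _).2 hx, fun i hi => ?_⟩, x, hx,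
      prod_zpow_eq_mul_pow_of_eq_mul_pow hx (fun i hi => h i (mem_filter.1 hi).1) hc⟩
    rw [h i hi, map_mul, map_pow]
  · rintro ⟨⟨x, hx, hxE⟩, y, hy, hprod⟩
    exact ⟨y, hy, eq_mul_pow_of_algebraMap_eq_mul_pow hdvd hc hx hxE hprod⟩

end Descent

theorem stmt13_general {L : Type*} [Field L]
    (q : ℕ) (hq : ∃ p n : ℕ, p.Prime ∧ 0 < n ∧ q = p ^ n)
    (r : ℕ)
    (g g' : ℕ → L)
    (I : Finset ℕ) (hI : I = (Finset.Icc 1 r).filter fun i => g i ≠ 0)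
    (d : ℕ) (hd : d = I.gcd fun k => q ^ k - 1) :
    ((∃ x : L, x ≠ 0 ∧ ∀ k ∈ Finset.Icc 1 r, g' k = g k * x ^ (q ^ k - 1)) ↔
      ((∃ x : AlgebraicClosure L, x ≠ 0 ∧ ∀ k ∈ Finset.Icc 1 r,
          algebraMap L (AlgebraicClosure L) (g' k)
            = algebraMap L (AlgebraicClosure L) (g k) * x ^ (q ^ k - 1)) ∧
        ∃ lam : ℕ → ℤ, (∑ k ∈ I, lam k * ((q : ℤ) ^ k - 1)) = (d : ℤ) ∧
          ∃ y : L, y ≠ 0 ∧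
            ∏ k ∈ I, g' k ^ lam k = (∏ k ∈ I, g k ^ lam k) * y ^ d))
    ∧
    ((∃ x : L, x ≠ 0 ∧ ∀ k ∈ Finset.Icc 1 r, g' k = g k * x ^ (q ^ k - 1)) ↔
      ((∃ x : AlgebraicClosure L, x ≠ 0 ∧ ∀ k ∈ Finset.Icc 1 r,
          algebraMap L (AlgebraicClosure L) (g' k)
            = algebraMap L (AlgebraicClosure L) (g k) * x ^ (q ^ k - 1)) ∧
        ∀ lam : ℕ → ℤ, (∑ k ∈ I, lam k * ((q : ℤ) ^ k - 1)) = (d : ℤ) →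
          ∃ y : L, y ≠ 0 ∧
            ∏ k ∈ I, g' k ^ lam k = (∏ k ∈ I, g k ^ lam k) * y ^ d)) := by
  obtain ⟨p, n, hp, -, hq⟩ := hq
  have hexp (k : ℕ) : (q : ℤ) ^ k - 1 = ((q ^ k - 1 : ℕ) : ℤ) := by
    rw [Nat.cast_sub (Nat.one_le_pow _ _ (hq ▸ pow_pos hp.pos n))]; push_cast; rfl
  simp only [hexp]
  subst hI hd
  have hdvd (k : ℕ) (hk : k ∈ Finset.Icc 1 r) (hgk : g k ≠ 0) :
      ({i ∈ Finset.Icc 1 r | g i ≠ 0}.gcd fun i => q ^ i - 1) ∣ q ^ k - 1 :=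
    Finset.gcd_dvd (Finset.mem_filter.2 ⟨hk, hgk⟩)
  have iff_of_sum_eq_gcd := fun lam hlam =>
    exists_eq_mul_pow_iff (E := AlgebraicClosure L) (g' := g') (c := lam) hdvd hlam
  obtain ⟨lam₀, hlam₀⟩ := Finset.exists_sum_mul_eq_gcd _ _
  have h₀ := iff_of_sum_eq_gcd lam₀ hlam₀
  refine ⟨⟨fun h => ⟨(h₀.1 h).1, lam₀, hlam₀, (h₀.1 h).2⟩, ?_⟩,
    ⟨fun h => ⟨(h₀.1 h).1, fun lam hlam => ((iff_of_sum_eq_gcd lam hlam).1 h).2⟩,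
      fun ⟨hE, hy⟩ => h₀.2 ⟨hE, hy lam₀ hlam₀⟩⟩⟩
  rintro ⟨hE, lam, hlam, hy⟩
  exact (iff_of_sum_eq_gcd lam hlam).2 ⟨hE, hy⟩

/-- A rank `r` Drinfeld module over the finite `A`-field `L` is recorded by its
coefficient vector `g : ℕ → L` (with `g k` the coefficient of `τ^k` in `φ_T`,
`g r ≠ 0`).  An isomorphism over a field extension `F` of `L` is an element
`x ∈ F^*` with `g'_k = g_k x^{q^k-1}` for all `k`. -/
theorem stmt13 {L : Type*} [Field L] [Fintype L]
    (q : ℕ) (hq : ∃ p n : ℕ, p.Prime ∧ 0 < n ∧ q = p ^ n)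
    (s : ℕ) (hs : 0 < s) (hcard : Fintype.card L = q ^ s)
    (r : ℕ) (hr : 0 < r)
    (g g' : ℕ → L) (hgr : g r ≠ 0) (hg'r : g' r ≠ 0)
    (I : Finset ℕ) (hI : I = (Finset.Icc 1 r).filter fun i => g i ≠ 0)
    (d : ℕ) (hd : d = I.gcd fun k => q ^ k - 1) :
    ((∃ x : L, x ≠ 0 ∧ ∀ k ∈ Finset.Icc 1 r, g' k = g k * x ^ (q ^ k - 1)) ↔
      ((∃ x : AlgebraicClosure L, x ≠ 0 ∧ ∀ k ∈ Finset.Icc 1 r,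
          algebraMap L (AlgebraicClosure L) (g' k)
            = algebraMap L (AlgebraicClosure L) (g k) * x ^ (q ^ k - 1)) ∧
        ∃ lam : ℕ → ℤ, (∑ k ∈ I, lam k * ((q : ℤ) ^ k - 1)) = (d : ℤ) ∧
          ∃ y : L, y ≠ 0 ∧
            ∏ k ∈ I, g' k ^ lam k = (∏ k ∈ I, g k ^ lam k) * y ^ d))
    ∧
    ((∃ x : L, x ≠ 0 ∧ ∀ k ∈ Finset.Icc 1 r, g' k = g k * x ^ (q ^ k - 1)) ↔
      ((∃ x : AlgebraicClosure L, x ≠ 0 ∧ ∀ k ∈ Finset.Icc 1 r,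
          algebraMap L (AlgebraicClosure L) (g' k)
            = algebraMap L (AlgebraicClosure L) (g k) * x ^ (q ^ k - 1)) ∧
        ∀ lam : ℕ → ℤ, (∑ k ∈ I, lam k * ((q : ℤ) ^ k - 1)) = (d : ℤ) →
          ∃ y : L, y ≠ 0 ∧
            ∏ k ∈ I, g' k ^ lam k = (∏ k ∈ I, g k ^ lam k) * y ^ d)) :=
  stmt13_general q hq r g g' I hI d hd
end

section
/- Let b₁, b₂ be nonzero elements of A = 𝔽_q[T] with square-free factorizations b₁ = μ₁∏_{i=1}^{n₁} b_{1i}^i and b₂ = μ₂∏_{j=1}^{n₂} b_{2j}^j. Set g₁ = ∏ b_{1i}^{⌊i/2⌋}, g₂ = ∏ b_{2j}^{⌊j/3⌋}, g = gcd(g₁,g₂), c₁ = b₁/g², c₂ = b₂/g³. Then c₁, c₂ ∈ A and there is no nonconstant c ∈ A with c² | c₁ and c³ | c₂ (i.e., x³ + c₁x + c₂ is in standard form). -/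
/-!
Write `v_p` for the `p`-adic valuation at an irreducible `p`. Since the `u i` are squarefree and
pairwise coprime, `p` divides at most one of them, say `u i`, and then
`v_p(∏ u j ^ (j / d)) = i / d` for every `d`; so if `e₁ = v_p(b₁)`, `e₂ = v_p(b₂)`, then
`v_p(g₁) = e₁ / 2`, `v_p(g₂) = e₂ / 3` and `p ^ m ∣ g` with `m = min (e₁ / 2) (e₂ / 3)`.
If `p ^ 2 ∣ c₁` and `p ^ 3 ∣ c₂`, then `2 m + 2 ≤ e₁` and `3 m + 3 ≤ e₂`, which contradicts the
choice of `m`.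
-/

open Polynomial Function

theorem Squarefree.emultiplicity_eq_one_of_dvd {M : Type*} [CommMonoid M] {p u : M}
    (hp : ¬IsUnit p) (hu : Squarefree u) (hpu : p ∣ u) : emultiplicity p u = 1 := by
  rw [← Nat.cast_one, emultiplicity_eq_coe]
  exact ⟨by simpa using hpu, fun h => hp (hu p (by simpa [sq] using h))⟩

theorem Finset.prod_pow_div_pow_dvd_prod_pow {M : Type*} [CommMonoid M] (s : Finset ℕ)
    (u : ℕ → M) (d : ℕ) : (∏ i ∈ s, u i ^ (i / d)) ^ d ∣ ∏ i ∈ s, u i ^ i := by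
  rw [← Finset.prod_pow]
  refine Finset.prod_dvd_prod_of_dvd _ _ fun i _ => ?_
  rw [← pow_mul]
  exact pow_dvd_pow _ (Nat.div_mul_le_self i d)

theorem not_pow_dvd_and_pow_dvd_of_emultiplicity {M : Type*} [CommMonoid M]
    {p b₁ b₂ g c₁ c₂ : M} {d₁ d₂ e₁ e₂ : ℕ} (hd₁ : 0 < d₁) (hd₂ : 0 < d₂)
    (he₁ : emultiplicity p b₁ = e₁) (he₂ : emultiplicity p b₂ = e₂)
    (hg : p ^ min (e₁ / d₁) (e₂ / d₂) ∣ g) (hb₁ : b₁ = g ^ d₁ * c₁) (hb₂ : b₂ = g ^ d₂ * c₂) :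
    ¬(p ^ d₁ ∣ c₁ ∧ p ^ d₂ ∣ c₂) := by
  rintro ⟨hc₁, hc₂⟩
  set m := min (e₁ / d₁) (e₂ / d₂)
  have key : ∀ {b c : M} {d e : ℕ}, 0 < d → emultiplicity p b = e → b = g ^ d * c →
      p ^ d ∣ c → m + 1 ≤ e / d := by
    intro b c d e hd he hb hc
    have hdvd : p ^ ((m + 1) * d) ∣ b := by
      rw [hb, add_mul, one_mul, pow_add, pow_mul]
      exact mul_dvd_mul (pow_dvd_pow_of_dvd hg d) hc
    have hle : (((m + 1) * d : ℕ) : ℕ∞) ≤ e := he ▸ le_emultiplicity_of_pow_dvd hdvd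
    exact (Nat.le_div_iff_mul_le hd).2 (by exact_mod_cast hle)
  have h₁ := key hd₁ he₁ hb₁ hc₁
  have h₂ := key hd₂ he₂ hb₂ hc₂
  omega

theorem emultiplicity_prod_pow_eq_zero {M ι : Type*} [CommMonoidWithZero M] {p : M}
    {s : Finset ι} {u : ι → M} (hp : Prime p) (f : ι → ℕ) (h : ∀ i ∈ s, ¬p ∣ u i) :
    emultiplicity p (∏ j ∈ s, u j ^ f j) = 0 := by
  refine emultiplicity_eq_zero.mpr fun hdvd => ?_
  obtain ⟨i, hi, hpi⟩ := (hp.dvd_finsetProd_iff _).1 hdvd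
  exact h i hi (hp.dvd_of_dvd_pow hpi)

section Domain

variable {R : Type*} [CommRing R] [IsDomain R] {ι : Type*} {p : R}

theorem emultiplicity_prod_pow_of_dvd {s : Finset ι} {u : ι → R} (hp : Prime p)
    (hu : ∀ i ∈ s, Squarefree (u i)) (hcop : (s : Set ι).Pairwise (IsCoprime on u))
    (f : ι → ℕ) {i : ι} (hi : i ∈ s) (hpu : p ∣ u i) :
    emultiplicity p (∏ j ∈ s, u j ^ f j) = f i := by
  rw [Finset.emultiplicity_prod hp, Finset.sum_eq_single_of_mem i hi, emultiplicity_pow hp,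
    (hu i hi).emultiplicity_eq_one_of_dvd hp.not_isUnit hpu, mul_one]
  intro j hj hji
  have hpj : ¬p ∣ u j := fun hpj => hp.not_isUnit ((hcop hi hj hji.symm).isUnit_of_dvd' hpu hpj)
  rw [emultiplicity_pow hp, emultiplicity_eq_zero.mpr hpj, mul_zero]

theorem exists_emultiplicity_prod_pow_div {s : Finset ℕ} {u : ℕ → R} (hp : Prime p)
    (hu : ∀ i ∈ s, Squarefree (u i)) (hcop : (s : Set ℕ).Pairwise (IsCoprime on u)) :
    ∃ e : ℕ, emultiplicity p (∏ i ∈ s, u i ^ i) = e ∧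
      ∀ d, emultiplicity p (∏ i ∈ s, u i ^ (i / d)) = (e / d : ℕ) := by
  by_cases h : ∃ i ∈ s, p ∣ u i
  · obtain ⟨i, hi, hpu⟩ := h
    exact ⟨i, emultiplicity_prod_pow_of_dvd hp hu hcop id hi hpu,
      fun d => emultiplicity_prod_pow_of_dvd hp hu hcop (· / d) hi hpu⟩
  · push Not at h
    exact ⟨0, emultiplicity_prod_pow_eq_zero hp id h,
      fun d => by simpa using emultiplicity_prod_pow_eq_zero hp (· / d) h⟩

end Domain

theorem emultiplicity_C_mul {K : Type*} [Field K] {p : K[X]} {μ : K} (hμ : μ ≠ 0) (f : K[X]) :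
    emultiplicity p (C μ * f) = emultiplicity p f :=
  emultiplicity_eq_of_associated_right (associated_unit_mul_left _ _ (isUnit_C.mpr hμ.isUnit))

open scoped Classical

theorem stmt17_general {Fq : Type*} [Field Fq]
    (b₁ b₂ : Polynomial Fq)
    (μ₁ μ₂ : Fq) (hμ₁ : μ₁ ≠ 0) (hμ₂ : μ₂ ≠ 0)
    (n₁ n₂ : ℕ) (u v : ℕ → Polynomial Fq)
    (hu : ∀ i ∈ Finset.Icc 1 n₁, (u i).Monic ∧ Squarefree (u i))
    (hv : ∀ j ∈ Finset.Icc 1 n₂, (v j).Monic ∧ Squarefree (v j))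
    (hucop : ∀ i ∈ Finset.Icc 1 n₁, ∀ i' ∈ Finset.Icc 1 n₁, i ≠ i' →
      IsCoprime (u i) (u i'))
    (hvcop : ∀ j ∈ Finset.Icc 1 n₂, ∀ j' ∈ Finset.Icc 1 n₂, j ≠ j' →
      IsCoprime (v j) (v j'))
    (hfac₁ : b₁ = C μ₁ * ∏ i ∈ Finset.Icc 1 n₁, u i ^ i)
    (hfac₂ : b₂ = C μ₂ * ∏ j ∈ Finset.Icc 1 n₂, v j ^ j)
    (g₁ g₂ g : Polynomial Fq)
    (hg₁ : g₁ = ∏ i ∈ Finset.Icc 1 n₁, u i ^ (i / 2))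
    (hg₂ : g₂ = ∏ j ∈ Finset.Icc 1 n₂, v j ^ (j / 3))
    (hg : g = EuclideanDomain.gcd g₁ g₂) :
    ∃ c₁ c₂ : Polynomial Fq, b₁ = g ^ 2 * c₁ ∧ b₂ = g ^ 3 * c₂ ∧
      ∀ c : Polynomial Fq, 1 ≤ c.natDegree → ¬ (c ^ 2 ∣ c₁ ∧ c ^ 3 ∣ c₂) := by
  obtain ⟨c₁, hc₁⟩ : g ^ 2 ∣ b₁ := by
    have : g ∣ g₁ := hg ▸ EuclideanDomain.gcd_dvd_left g₁ g₂
    rw [hfac₁]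
    exact dvd_mul_of_dvd_right ((pow_dvd_pow_of_dvd this 2).trans
      (hg₁ ▸ Finset.prod_pow_div_pow_dvd_prod_pow _ u 2)) _
  obtain ⟨c₂, hc₂⟩ : g ^ 3 ∣ b₂ := by
    have : g ∣ g₂ := hg ▸ EuclideanDomain.gcd_dvd_right g₁ g₂
    rw [hfac₂]
    exact dvd_mul_of_dvd_right ((pow_dvd_pow_of_dvd this 3).trans
      (hg₂ ▸ Finset.prod_pow_div_pow_dvd_prod_pow _ v 3)) _
  refine ⟨c₁, c₂, hc₁, hc₂, fun c hc hdvd => ?_⟩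
  obtain ⟨p, hp, hpc⟩ := exists_irreducible_of_natDegree_pos hc
  obtain ⟨e₁, he₁, hge₁⟩ := exists_emultiplicity_prod_pow_div hp.prime (fun i hi => (hu i hi).2)
    fun i hi i' hi' => hucop i hi i' hi'
  obtain ⟨e₂, he₂, hge₂⟩ := exists_emultiplicity_prod_pow_div hp.prime (fun j hj => (hv j hj).2)
    fun j hj j' hj' => hvcop j hj j' hj'
  have hpg : p ^ min (e₁ / 2) (e₂ / 3) ∣ g := hg ▸ EuclideanDomain.dvd_gcd
    (pow_dvd_of_le_emultiplicity (by rw [hg₁, hge₁]; exact_mod_cast min_le_left _ _))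
    (pow_dvd_of_le_emultiplicity (by rw [hg₂, hge₂]; exact_mod_cast min_le_right _ _))
  exact not_pow_dvd_and_pow_dvd_of_emultiplicity two_pos three_pos
    (by rw [hfac₁, emultiplicity_C_mul hμ₁, he₁]) (by rw [hfac₂, emultiplicity_C_mul hμ₂, he₂])
    hpg hc₁ hc₂ ⟨(pow_dvd_pow_of_dvd hpc 2).trans hdvd.1, (pow_dvd_pow_of_dvd hpc 3).trans hdvd.2⟩

theorem stmt17 {Fq : Type*} [Field Fq] [Fintype Fq]
    (b₁ b₂ : Polynomial Fq) (hb₁ : b₁ ≠ 0) (hb₂ : b₂ ≠ 0)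
    (μ₁ μ₂ : Fq) (hμ₁ : μ₁ ≠ 0) (hμ₂ : μ₂ ≠ 0)
    (n₁ n₂ : ℕ) (u v : ℕ → Polynomial Fq)
    (hu : ∀ i ∈ Finset.Icc 1 n₁, (u i).Monic ∧ Squarefree (u i))
    (hv : ∀ j ∈ Finset.Icc 1 n₂, (v j).Monic ∧ Squarefree (v j))
    (hucop : ∀ i ∈ Finset.Icc 1 n₁, ∀ i' ∈ Finset.Icc 1 n₁, i ≠ i' →
      IsCoprime (u i) (u i'))
    (hvcop : ∀ j ∈ Finset.Icc 1 n₂, ∀ j' ∈ Finset.Icc 1 n₂, j ≠ j' →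
      IsCoprime (v j) (v j'))
    (hfac₁ : b₁ = C μ₁ * ∏ i ∈ Finset.Icc 1 n₁, u i ^ i)
    (hfac₂ : b₂ = C μ₂ * ∏ j ∈ Finset.Icc 1 n₂, v j ^ j)
    (g₁ g₂ g : Polynomial Fq)
    (hg₁ : g₁ = ∏ i ∈ Finset.Icc 1 n₁, u i ^ (i / 2))
    (hg₂ : g₂ = ∏ j ∈ Finset.Icc 1 n₂, v j ^ (j / 3))
    (hg : g = EuclideanDomain.gcd g₁ g₂) :
    ∃ c₁ c₂ : Polynomial Fq, b₁ = g ^ 2 * c₁ ∧ b₂ = g ^ 3 * c₂ ∧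
      ∀ c : Polynomial Fq, 1 ≤ c.natDegree → ¬ (c ^ 2 ∣ c₁ ∧ c ^ 3 ∣ c₂) :=
  stmt17_general b₁ b₂ μ₁ μ₂ hμ₁ hμ₂ n₁ n₂ u v hu hv hucop hvcop hfac₁ hfac₂ g₁ g₂ g hg₁ hg₂ hg
end
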